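/- Let v₁,…,v_n ∈ ℝ^d be a sequence of vectors, λ > 0, and suppose each index t in a subset S ⊆ [n] satisfies ‖v_t‖²_{(λI + Σ_{i<t, i∈S} v_i v_iᵀ)⁻¹} ≥ 1. Then |S| ≤ (1/log 2)·log(det(λI + Σ_{i∈S} v_i v_iᵀ)/det(λI)) (elliptical potential count lemma). -/

import Mathlib

open Matrix

/-!
Write `Vₜ = A + ∑_{i ∈ S, i < t} vᵢ vᵢᵀ` for the design matrix before step `t`. By the matrix
determinant lemma, `det (Vₜ + vₜ vₜᵀ) = det Vₜ · (1 + ‖vₜ‖²_{Vₜ⁻¹}) ≥ 2 det Vₜ` whenever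
`‖vₜ‖²_{Vₜ⁻¹} ≥ 1`. Adding the indices of `S` in increasing order therefore multiplies
`det A` by at least `2 ^ |S|`, and taking logarithms gives the count.
-/

namespace Matrix

variable {m ι : Type*} [Fintype m]

theorem det_add_vecMulVec [DecidableEq m] {α : Type*} [CommRing α] {A : Matrix m m α}
    (hA : IsUnit A.det) (u w : m → α) :
    (A + vecMulVec u w).det = A.det * (1 + w ⬝ᵥ A⁻¹ *ᵥ u) := by
  rw [vecMulVec_eq Unit, det_add_replicateCol_mul_replicateRow hA]
  congr 1
  rw [det_unique, add_apply, one_apply_eq, Matrix.mul_assoc]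
  rfl

theorem PosDef.add_sum_vecMulVec_self {A : Matrix m m ℝ} (hA : A.PosDef) (v : ι → m → ℝ)
    (T : Finset ι) : (A + ∑ i ∈ T, vecMulVec (v i) (v i)).PosDef :=
  hA.add_posSemidef <| posSemidef_sum T fun i _ => by
    simpa using posSemidef_vecMulVec_self_star (v i)

theorem two_pow_card_mul_det_le_det_add_sum_vecMulVec [DecidableEq m] [LinearOrder ι]
    {A : Matrix m m ℝ} (hA : A.PosDef) (v : ι → m → ℝ) (S : Finset ι)
    (h : ∀ t ∈ S, 1 ≤ v t ⬝ᵥ (A + ∑ i ∈ S.filter (· < t), vecMulVec (v i) (v i))⁻¹ *ᵥ v t) :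
    2 ^ S.card * A.det ≤ (A + ∑ i ∈ S, vecMulVec (v i) (v i)).det := by
  induction S using Finset.induction_on_max with
  | empty => simp
  | insert a S ha ih =>
    have haS : a ∉ S := fun haS => lt_irrefl a (ha a haS)
    have hpast : (insert a S).filter (· < a) = S := by
      rw [Finset.filter_insert, if_neg (lt_irrefl a), Finset.filter_true_of_mem ha]
    have hearlier : ∀ t ∈ S, (insert a S).filter (· < t) = S.filter (· < t) := fun t ht => by
      rw [Finset.filter_insert, if_neg (ha t ht).not_gt]
    have hih := ih fun t ht => hearlier t ht ▸ h t (Finset.mem_insert_of_mem ht)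
    have hstep := h a (Finset.mem_insert_self a S)
    rw [hpast] at hstep
    have hV := hA.add_sum_vecMulVec_self v S
    rw [Finset.sum_insert haS, add_left_comm, add_comm, det_add_vecMulVec hV.det_pos.ne'.isUnit,
      Finset.card_insert_of_notMem haS, pow_succ]
    calc 2 ^ S.card * 2 * A.det = 2 ^ S.card * A.det * 2 := by ring
      _ ≤ _ := mul_le_mul hih (by linarith) zero_le_two hV.det_pos.le

end Matrix

theorem elliptical_potential_count_general {d : ℕ} (lam : ℝ) (hlam : 0 < lam)
    (v : ℕ → Fin d → ℝ) (S : Finset ℕ)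
    (h : ∀ t ∈ S, 1 ≤ v t ⬝ᵥ (lam • (1 : Matrix (Fin d) (Fin d) ℝ) +
      ∑ i ∈ S.filter (· < t), vecMulVec (v i) (v i))⁻¹ *ᵥ v t) :
    (S.card : ℝ) ≤ (1 / Real.log 2) *
      Real.log ((lam • (1 : Matrix (Fin d) (Fin d) ℝ) +
        ∑ i ∈ S, vecMulVec (v i) (v i)).det /
        (lam • (1 : Matrix (Fin d) (Fin d) ℝ)).det) := by
  have hA : (lam • (1 : Matrix (Fin d) (Fin d) ℝ)).PosDef := PosDef.one.smul hlam
  have hgrowth := two_pow_card_mul_det_le_det_add_sum_vecMulVec hA v S h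
  rw [one_div_mul_eq_div, le_div_iff₀ (Real.log_pos one_lt_two), ← Real.log_pow]
  exact Real.log_le_log (by positivity) ((le_div_iff₀ hA.det_pos).2 hgrowth)

theorem elliptical_potential_count {d n : ℕ} (lam : ℝ) (hlam : 0 < lam)
    (v : ℕ → Fin d → ℝ) (S : Finset ℕ) (hS : S ⊆ Finset.range n)
    (h : ∀ t ∈ S, 1 ≤ v t ⬝ᵥ (lam • (1 : Matrix (Fin d) (Fin d) ℝ) +
      ∑ i ∈ S.filter (· < t), vecMulVec (v i) (v i))⁻¹ *ᵥ v t) :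
    (S.card : ℝ) ≤ (1 / Real.log 2) *
      Real.log ((lam • (1 : Matrix (Fin d) (Fin d) ℝ) +
        ∑ i ∈ S, vecMulVec (v i) (v i)).det /
        (lam • (1 : Matrix (Fin d) (Fin d) ℝ)).det) :=
  elliptical_potential_count_general lam hlam v S h
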